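/- arXiv:2102.08242 — 10 statements merged into one kernel-verified Lean document; each statement's English description precedes it below -/
import Mathlib

section
/- Let d ≥ 1 and let M : ℝ → Matrix (Fin d) (Fin d) ℝ be continuous on [0, ∞) with nonnegative off-diagonal entries there, i.e. (M t) k ℓ ≥ 0 for all t ≥ 0 and all k ≠ ℓ. Let y : ℝ → (Fin d → ℝ) satisfy HasDerivAt y (M t *ᵥ y t) t for every t ≥ 0. If y 0 ⪰ 0, then y t ⪰ 0 for every t ≥ 0. -/
/-!
Let `f t = ‖(y t)⁻‖` measure how far `y t` is from the nonnegative cone. Near a time `x`,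
`y z` is within `o(z - x)` of the Euler step `y x + (z - x) • A (y x)`, and the Euler step of the
positive part, `(y x)⁺ + (z - x) • A (y x)⁺`, stays in the cone for small `z - x` (for a matrix
with nonnegative off-diagonal entries this is the nonnegativity of `1 + h • A`). Comparing the two
gives the Dini estimate `D⁺f ≤ L f`, where `L` bounds `‖A t‖` on `[0, T]`, and Gronwall's
inequality with `f 0 = 0` forces `f ≡ 0`.
-/

open Filter Topology Set Matrix

instance Pi.hasSolidNorm {ι α : Type*} [Fintype ι] [NormedAddCommGroup α] [Lattice α]
    [HasSolidNorm α] : HasSolidNorm (ι → α) where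
  solid x y h := (pi_norm_le_iff_of_nonneg (norm_nonneg y)).2 fun i =>
    (norm_le_norm_of_abs_le_abs (by simpa only [Pi.abs_apply] using h i)).trans
      (norm_le_pi_norm y i)

section NormedLattice

variable {E : Type*} [NormedAddCommGroup E] [Lattice E] [HasSolidNorm E] [IsOrderedAddMonoid E]

lemma norm_negPart_le_norm_sub {a q : E} (hq : 0 ≤ q) : ‖a⁻‖ ≤ ‖a - q‖ := by
  simpa [negPart_eq_zero.2 hq, dist_eq_norm] using lipschitzWith_negPart.dist_le_mul a q

variable [NormedSpace ℝ E]

lemma frequently_slope_norm_negPart_lt {A : E →L[ℝ] E} {y : ℝ → E} {x L r : ℝ}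
    (hy : HasDerivWithinAt y (A (y x)) (Ici x) x) (hA : ‖A‖ ≤ L)
    (hstep : ∀ᶠ h in 𝓝[>] (0 : ℝ), ∀ p : E, 0 ≤ p → 0 ≤ p + h • A p)
    (hr : L * ‖(y x)⁻‖ < r) :
    ∃ᶠ z in 𝓝[>] x, (z - x)⁻¹ * (‖(y z)⁻‖ - ‖(y x)⁻‖) < r := by
  set c := (r - L * ‖(y x)⁻‖) / 2
  have hc : 0 < c := by simp only [c]; linarith
  have hshift : Tendsto (· - x) (𝓝[>] x) (𝓝[>] 0) :=
    tendsto_nhdsWithin_iff.2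
      ⟨((continuous_sub_right x).tendsto' x 0 (sub_self x)).mono_left nhdsWithin_le_nhds,
        eventually_mem_nhdsWithin.mono fun z hz => mem_Ioi.2 (sub_pos.2 hz)⟩
  have hlin : ∀ᶠ z in 𝓝[>] x, ‖y z - y x - (z - x) • A (y x)‖ ≤ c * ‖z - x‖ :=
    nhdsWithin_mono _ Ioi_subset_Ici_self ((hasDerivWithinAt_iff_isLittleO.1 hy).bound hc)
  refine ((hshift.eventually hstep).and (hlin.and self_mem_nhdsWithin)).frequently.mono ?_
  rintro z ⟨hzstep, hzlin, hxz : x < z⟩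
  set h := z - x
  have hh : 0 < h := sub_pos.2 hxz
  set p := (y x)⁺
  set n := (y x)⁻
  have hyx : y x = p - n := (posPart_sub_negPart _).symm
  have hest : ‖(y z)⁻‖ ≤ c * h + ‖n‖ + h * (L * ‖n‖) :=
    calc ‖(y z)⁻‖ ≤ ‖y z - (p + h • A p)‖ := norm_negPart_le_norm_sub (hzstep p (posPart_nonneg _))
      _ = ‖(y z - y x - h • A (y x)) - (n + h • A n)‖ := by
          rw [hyx, map_sub, smul_sub]; abel_nf
      _ ≤ ‖y z - y x - h • A (y x)‖ + (‖n‖ + ‖h • A n‖) :=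
          (norm_sub_le _ _).trans (by gcongr; exact norm_add_le _ _)
      _ ≤ c * h + (‖n‖ + h * (L * ‖n‖)) := by
          rw [norm_smul, Real.norm_of_nonneg hh.le]
          gcongr
          · simpa [Real.norm_of_nonneg hh.le] using hzlin
          · exact A.le_of_opNorm_le hA n
      _ = c * h + ‖n‖ + h * (L * ‖n‖) := by ring
  have hcr : c + L * ‖n‖ < r := by simp only [c, n]; linarith
  rw [inv_mul_lt_iff₀ hh]
  nlinarith [mul_lt_mul_of_pos_left hcr hh]

theorem nonneg_of_hasDerivWithinAt_of_eulerStep_nonneg {A : ℝ → E →L[ℝ] E} {y : ℝ → E}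
    {a b L : ℝ} (hyc : ContinuousOn y (Icc a b))
    (hy : ∀ t ∈ Ico a b, HasDerivWithinAt y (A t (y t)) (Ici t) t)
    (hA : ∀ t ∈ Ico a b, ‖A t‖ ≤ L)
    (hstep : ∀ t ∈ Ico a b, ∀ᶠ h in 𝓝[>] (0 : ℝ), ∀ p : E, 0 ≤ p → 0 ≤ p + h • A t p)
    (ha : 0 ≤ y a) : ∀ t ∈ Icc a b, 0 ≤ y t := by
  have hgronwall := le_gronwallBound_of_liminf_deriv_right_le (f := fun t => ‖(y t)⁻‖)
    (f' := fun t => L * ‖(y t)⁻‖) (δ := 0) (K := L) (ε := 0)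
    (continuous_norm.comp_continuousOn (continuous_negPart.comp_continuousOn hyc))
    (fun x hx r hr => frequently_slope_norm_negPart_lt (hy x hx) (hA x hx) (hstep x hx) hr)
    (by simp [negPart_eq_zero.2 ha]) (fun _ _ => by simp)
  intro t ht
  have hnorm := hgronwall t ht
  rw [gronwallBound_ε0_δ0] at hnorm
  exact negPart_eq_zero.1 (norm_le_zero_iff.1 hnorm)

end NormedLattice

namespace Matrix

variable {n : Type*} [Fintype n] [DecidableEq n] {A : Matrix n n ℝ}

lemma nonneg_add_smul_mulVec (hA : ∀ i j, i ≠ j → 0 ≤ A i j) {h : ℝ} (hh : 0 ≤ h)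
    (hdiag : ∀ i, -1 ≤ h * A i i) {v : n → ℝ} (hv : 0 ≤ v) : 0 ≤ v + h • A *ᵥ v := by
  have hstep : v + h • A *ᵥ v = (1 + h • A) *ᵥ v := by
    rw [add_mulVec, one_mulVec, smul_mulVec]
  rw [hstep]
  refine fun i => Finset.sum_nonneg fun j _ => mul_nonneg ?_ (hv j)
  rcases eq_or_ne i j with rfl | hij
  · simp only [add_apply, one_apply_eq, smul_apply, smul_eq_mul]
    linarith [hdiag i]
  · simp only [add_apply, one_apply_ne hij, smul_apply, smul_eq_mul, zero_add]
    exact mul_nonneg hh (hA i j hij)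

lemma eventually_nonneg_add_smul_mulVec (hA : ∀ i j, i ≠ j → 0 ≤ A i j) :
    ∀ᶠ h in 𝓝[>] (0 : ℝ), ∀ v : n → ℝ, 0 ≤ v → 0 ≤ v + h • A *ᵥ v := by
  have hdiag : ∀ᶠ h in 𝓝 (0 : ℝ), ∀ i, -1 < h * A i i := eventually_all.2 fun i =>
    ((continuous_mul_const (A i i)).tendsto' 0 0 (zero_mul _)).eventually_const_lt (by norm_num)
  filter_upwards [nhdsWithin_le_nhds hdiag, self_mem_nhdsWithin] with h hdiag hh v hv
  exact nonneg_add_smul_mulVec hA hh.le (fun i => (hdiag i).le) hv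

end Matrix

theorem positivity_preservation_general
    {d : ℕ}
    (M : ℝ → Matrix (Fin d) (Fin d) ℝ)
    (hMc : ContinuousOn M (Set.Ici (0 : ℝ)))
    (hMoff : ∀ t : ℝ, 0 ≤ t → ∀ k ℓ : Fin d, k ≠ ℓ → 0 ≤ M t k ℓ)
    (y : ℝ → (Fin d → ℝ))
    (hy : ∀ t : ℝ, 0 ≤ t → HasDerivAt y (M t *ᵥ y t) t)
    (hy0 : ∀ i : Fin d, 0 ≤ y 0 i) :
    ∀ t : ℝ, 0 ≤ t → ∀ i : Fin d, 0 ≤ y t i := by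
  intro T hT
  let Φ := (Matrix.toLin'.trans LinearMap.toContinuousLinearMap :
    Matrix (Fin d) (Fin d) ℝ ≃ₗ[ℝ] (Fin d → ℝ) →L[ℝ] (Fin d → ℝ))
  obtain ⟨L, hL⟩ := isCompact_Icc.exists_bound_of_continuousOn
    ((LinearMap.continuous_of_finiteDimensional Φ.toLinearMap).comp_continuousOn
      (hMc.mono (Icc_subset_Ici_self : Icc 0 T ⊆ Ici 0)))
  exact nonneg_of_hasDerivWithinAt_of_eulerStep_nonneg (A := fun t => Φ (M t))
    (fun t ht => (hy t ht.1).continuousAt.continuousWithinAt)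
    (fun t ht => (hy t ht.1).hasDerivWithinAt) (fun t ht => hL t (Ico_subset_Icc_self ht))
    (fun t ht => Matrix.eventually_nonneg_add_smul_mulVec (hMoff t ht.1)) hy0 T ⟨hT, le_rfl⟩

/-- Positivity-preservation half of Proposition 1: if `M` is continuous on `[0, ∞)`
with nonnegative off-diagonal entries there, then solutions of `y' = M t *ᵥ y` with
nonnegative initial data stay nonnegative. -/
theorem positivity_preservation
    {d : ℕ} (hd : 1 ≤ d)
    (M : ℝ → Matrix (Fin d) (Fin d) ℝ)
    (hMc : ContinuousOn M (Set.Ici (0 : ℝ)))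
    (hMoff : ∀ t : ℝ, 0 ≤ t → ∀ k ℓ : Fin d, k ≠ ℓ → 0 ≤ M t k ℓ)
    (y : ℝ → (Fin d → ℝ))
    (hy : ∀ t : ℝ, 0 ≤ t → HasDerivAt y (M t *ᵥ y t) t)
    (hy0 : ∀ i : Fin d, 0 ≤ y 0 i) :
    ∀ t : ℝ, 0 ≤ t → ∀ i : Fin d, 0 ≤ y t i :=
  positivity_preservation_general M hMc hMoff y hy hy0
end

section
/- Let A be an n × n real graph Laplacian matrix and let λ ∈ ℂ be an eigenvalue of A (i.e. of the complex matrix obtained by mapping the entries of A into ℂ). If λ ≠ 0, then Re λ < 0. -/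
open Matrix

/-- An `n × n` real matrix is a graph Laplacian if its off-diagonal entries are
nonnegative, its diagonal entries are nonpositive, and each column sums to zero. -/
def IsGraphLaplacian {n : ℕ} (A : Matrix (Fin n) (Fin n) ℝ) : Prop :=
  (∀ k ℓ : Fin n, k ≠ ℓ → 0 ≤ A k ℓ) ∧ (∀ k : Fin n, A k k ≤ 0) ∧
    (∀ ℓ : Fin n, ∑ k : Fin n, A k ℓ = 0)

/-- Theorem 2 (location of the spectrum): every nonzero complex eigenvalue of a
graph Laplacian has negative real part. -/
theorem graphLaplacian_eigenvalues_re_neg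
    {n : ℕ} (A : Matrix (Fin n) (Fin n) ℝ)
    (hA : IsGraphLaplacian A)
    (lam : ℂ) (hlam : lam ∈ spectrum ℂ (A.map (Complex.ofReal)))
    (hne : lam ≠ 0) :
    lam.re < 0 := by
  obtain ⟨hoff, hdiag, hcol⟩ := hA
  set B := A.map (Complex.ofReal) with hB
  -- lam is in spectrum of Bᵀ
  have hspecT : lam ∈ spectrum ℂ Bᵀ := by
    rw [spectrum.mem_iff] at hlam ⊢
    rw [Matrix.isUnit_iff_isUnit_det] at hlam ⊢
    rwa [show (algebraMap ℂ (Matrix (Fin n) (Fin n) ℂ)) lam - Bᵀ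
        = ((algebraMap ℂ (Matrix (Fin n) (Fin n) ℂ)) lam - B)ᵀ by
          simp [Matrix.transpose_sub, Matrix.algebraMap_eq_diagonal],
      Matrix.det_transpose]
  have heig : Module.End.HasEigenvalue (Matrix.toLin' Bᵀ) lam := by
    have h' : lam ∈ spectrum ℂ (Matrix.toLinAlgEquiv' Bᵀ) := by
      rwa [AlgEquiv.spectrum_eq]
    exact Module.End.HasEigenvalue.of_mem_spectrum h'
  obtain ⟨k, hk⟩ := eigenvalue_mem_ball heig
  rw [Metric.mem_closedBall] at hk
  have hrad : ∑ j ∈ Finset.univ.erase k, ‖Bᵀ k j‖ = -A k k := by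
    have : ∀ j ∈ Finset.univ.erase k, ‖Bᵀ k j‖ = A j k := by
      intro j hj
      rw [Finset.mem_erase] at hj
      simp only [Matrix.transpose_apply, hB, Matrix.map_apply,
        Complex.norm_real, Real.norm_eq_abs]
      exact abs_of_nonneg (hoff j k hj.1)
    rw [Finset.sum_congr rfl this]
    have := hcol k
    rw [← Finset.add_sum_erase _ _ (Finset.mem_univ k)] at this
    linarith
  rw [hrad] at hk
  have hkk : (Bᵀ k k) = (A k k : ℂ) := by simp [hB]
  rw [hkk] at hk
  have h2 : (lam.re - A k k)^2 + lam.im^2 ≤ (A k k)^2 := by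
    have := hk
    rw [Complex.dist_eq, Complex.norm_def, Complex.normSq_apply] at this
    have h0 : Real.sqrt ((lam.re - A k k)^2 + lam.im^2) ≤ -A k k := by
      convert this using 2 <;> simp [pow_two]
    nlinarith [Real.sq_sqrt (by positivity : (0:ℝ) ≤ (lam.re - A k k)^2 + lam.im^2),
      Real.sqrt_nonneg ((lam.re - A k k)^2 + lam.im^2)]
  have hAkk := hdiag k
  by_contra h
  push_neg at h
  have him : lam.im = 0 := by nlinarith
  have hre : lam.re = 0 := by nlinarith
  exact hne (Complex.ext hre him)
end

section
/- Let d ≥ 1 and let M : ℝ → Matrix (Fin d) (Fin d) ℝ be such that for every t ≥ 0 the matrix M t is a symmetric graph Laplacian. Let y : ℝ → (Fin d → ℝ) satisfy HasDerivAt y (M t *ᵥ y t) t for every t ≥ 0. Then the squared Euclidean norm of the solution is nonincreasing: for all 0 ≤ s ≤ t, ∑_i (y t i)² ≤ ∑_i (y s i)². -/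
/-!
For a symmetric matrix `A` with zero row and column sums,
`∑ k ℓ, A k ℓ (x k - x ℓ)² = -2 xᵀ A x`, so a graph Laplacian, whose off-diagonal entries are
nonnegative, has a nonpositive quadratic form. Along a solution of `y' = M t y` the derivative of
`‖y‖²` is `2 yᵀ M y ≤ 0`, and the mean value theorem makes `‖y‖²` nonincreasing.
-/

open Matrix

namespace Matrix

variable {ι R : Type*} [Fintype ι]

theorem sum_sum_mul_sub_sq_eq [CommRing R] {A : Matrix ι ι R}
    (hrow : ∀ k, ∑ ℓ, A k ℓ = 0) (hcol : ∀ ℓ, ∑ k, A k ℓ = 0) (x : ι → R) :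
    ∑ k, ∑ ℓ, A k ℓ * (x k - x ℓ) ^ 2 = -2 * (x ⬝ᵥ A *ᵥ x) := by
  have hrow_sq : ∑ k, ∑ ℓ, A k ℓ * x k ^ 2 = 0 := by
    simp [← Finset.sum_mul, hrow]
  have hcol_sq : ∑ k, ∑ ℓ, A k ℓ * x ℓ ^ 2 = 0 := by
    rw [Finset.sum_comm]; simp [← Finset.sum_mul, hcol]
  have hquad : x ⬝ᵥ A *ᵥ x = ∑ k, ∑ ℓ, A k ℓ * x k * x ℓ := by
    simp only [dotProduct, mulVec, Finset.mul_sum]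
    exact Finset.sum_congr rfl fun k _ => Finset.sum_congr rfl fun ℓ _ => by ring
  calc ∑ k, ∑ ℓ, A k ℓ * (x k - x ℓ) ^ 2
      = ∑ k, ∑ ℓ, A k ℓ * x k ^ 2 + ∑ k, ∑ ℓ, A k ℓ * x ℓ ^ 2
          - 2 * ∑ k, ∑ ℓ, A k ℓ * x k * x ℓ := by
        simp only [Finset.mul_sum, ← Finset.sum_add_distrib, ← Finset.sum_sub_distrib]
        exact Finset.sum_congr rfl fun k _ => Finset.sum_congr rfl fun ℓ _ => by ring
    _ = -2 * (x ⬝ᵥ A *ᵥ x) := by rw [hrow_sq, hcol_sq, hquad]; ring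

end Matrix

theorem IsGraphLaplacian.dotProduct_mulVec_self_nonpos {n : ℕ} {A : Matrix (Fin n) (Fin n) ℝ}
    (hA : IsGraphLaplacian A) (hsymm : A.IsSymm) (x : Fin n → ℝ) :
    x ⬝ᵥ A *ᵥ x ≤ 0 := by
  obtain ⟨hoff, -, hcol⟩ := hA
  have hrow : ∀ k, ∑ ℓ, A k ℓ = 0 := fun k => by simpa only [hsymm.apply] using hcol k
  have hnonneg : 0 ≤ ∑ k, ∑ ℓ, A k ℓ * (x k - x ℓ) ^ 2 := by
    refine Finset.sum_nonneg fun k _ => Finset.sum_nonneg fun ℓ _ => ?_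
    rcases eq_or_ne k ℓ with rfl | hkℓ
    · simp
    · exact mul_nonneg (hoff k ℓ hkℓ) (sq_nonneg _)
  linarith [sum_sum_mul_sub_sq_eq hrow hcol x]

theorem HasDerivAt.sum_sq {ι : Type*} [Fintype ι] {y : ℝ → ι → ℝ} {y' : ι → ℝ} {t : ℝ}
    (hy : HasDerivAt y y' t) :
    HasDerivAt (fun s => ∑ i, y s i ^ 2) (2 * (y t ⬝ᵥ y')) t := by
  have hcoord (i : ι) : HasDerivAt (fun s => y s i ^ 2) (2 * (y t i * y' i)) t := by
    simpa [mul_assoc] using (hasDerivAt_pi.1 hy i).fun_pow 2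
  simpa only [dotProduct, Finset.mul_sum] using HasDerivAt.fun_sum fun i _ => hcoord i

theorem antitoneOn_sum_sq_of_dotProduct_deriv_nonpos {ι : Type*} [Fintype ι] {D : Set ℝ}
    (hD : Convex ℝ D) {y y' : ℝ → ι → ℝ} (hy : ∀ t ∈ D, HasDerivAt y (y' t) t)
    (hdiss : ∀ t ∈ D, y t ⬝ᵥ y' t ≤ 0) :
    AntitoneOn (fun t => ∑ i, y t i ^ 2) D := by
  have hderiv (t) (ht : t ∈ D) := (hy t ht).sum_sq
  refine antitoneOn_of_hasDerivWithinAt_nonpos hD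
    (fun t ht => (hderiv t ht).continuousAt.continuousWithinAt)
    (fun t ht => (hderiv t (interior_subset ht)).hasDerivWithinAt)
    (fun t ht => ?_)
  linarith [hdiss t (interior_subset ht)]

theorem sq_norm_nonincreasing_general
    {d : ℕ}
    (M : ℝ → Matrix (Fin d) (Fin d) ℝ)
    (hM : ∀ t : ℝ, 0 ≤ t → IsGraphLaplacian (M t) ∧ (M t).IsSymm)
    (y : ℝ → (Fin d → ℝ))
    (hy : ∀ t : ℝ, 0 ≤ t → HasDerivAt y (M t *ᵥ y t) t) :
    ∀ s t : ℝ, 0 ≤ s → s ≤ t → ∑ i : Fin d, (y t i) ^ 2 ≤ ∑ i : Fin d, (y s i) ^ 2 := by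
  have hanti : AntitoneOn (fun t => ∑ i, y t i ^ 2) (Set.Ici 0) :=
    antitoneOn_sum_sq_of_dotProduct_deriv_nonpos (convex_Ici 0) hy fun t ht =>
      (hM t ht).1.dotProduct_mulVec_self_nonpos (hM t ht).2 (y t)
  intro s t hs hst
  exact hanti hs (hs.trans hst) hst

/-- Proposition 3: if `M t` is a symmetric graph Laplacian for every `t ≥ 0`, the
squared Euclidean norm of a solution of `y' = M t *ᵥ y` is nonincreasing. -/
theorem sq_norm_nonincreasing
    {d : ℕ} (hd : 1 ≤ d)
    (M : ℝ → Matrix (Fin d) (Fin d) ℝ)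
    (hM : ∀ t : ℝ, 0 ≤ t → IsGraphLaplacian (M t) ∧ (M t).IsSymm)
    (y : ℝ → (Fin d → ℝ))
    (hy : ∀ t : ℝ, 0 ≤ t → HasDerivAt y (M t *ᵥ y t) t) :
    ∀ s t : ℝ, 0 ≤ s → s ≤ t → ∑ i : Fin d, (y t i) ^ 2 ≤ ∑ i : Fin d, (y s i) ^ 2 :=
  sq_norm_nonincreasing_general M hM y hy
end

section
/- Let A be an n × n real graph Laplacian matrix, let t ≥ 0, and let p ∈ ℝⁿ satisfy p ⪰ 0 and ∑_i p_i = 1. Then the vector q = exp(t·A) *ᵥ p satisfies q ⪰ 0 and ∑_i q_i = 1. -/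
/-! Write `B = t • A`. Its off-diagonal entries are nonnegative, so `B + c • 1` is entrywise
nonnegative for large `c`; then `exp B = exp (-c) • exp (B + c • 1)` is entrywise nonnegative
by the power series. Its columns sum to zero, i.e. `1 ᵥ* B = 0`, so every term of the series
of `1 ᵥ* exp B` beyond the constant one vanishes and `1 ᵥ* exp B = 1`: the total mass is
preserved. -/

open Matrix

namespace Matrix

open NormedSpace
open scoped Nat

variable {ι : Type*} [Fintype ι] [DecidableEq ι]

theorem hasSum_exp_series {𝕂 : Type*} [RCLike 𝕂] (M : Matrix ι ι 𝕂) :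
    HasSum (fun m => (m !⁻¹ : 𝕂) • M ^ m) (exp M) :=
  open scoped Norms.Operator in exp_series_hasSum_exp' M

theorem vecMul_exp_of_vecMul_eq_zero {𝕂 : Type*} [RCLike 𝕂] {v : ι → 𝕂} {B : Matrix ι ι 𝕂}
    (h : v ᵥ* B = 0) : v ᵥ* exp B = v := by
  have hseries := (hasSum_exp_series B).map
    (AddMonoidHom.mk' (v ᵥ* ·) fun X Y => vecMul_add X Y v)
    (continuous_const.matrix_vecMul continuous_id)
  have hhigher : ∀ m ≠ 0, v ᵥ* ((m !⁻¹ : 𝕂) • B ^ m) = 0 := by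
    intro m hm
    obtain ⟨k, rfl⟩ := Nat.exists_eq_add_one_of_ne_zero hm
    rw [vecMul_smul, pow_succ', ← vecMul_vecMul, h, zero_vecMul, smul_zero]
  simpa using hseries.unique (hasSum_single 0 hhigher)

theorem exp_smul_one (c : ℝ) : exp (c • (1 : Matrix ι ι ℝ)) = Real.exp c • 1 := by
  rw [← Algebra.algebraMap_eq_smul_one, ← Algebra.algebraMap_eq_smul_one, Real.exp_eq_exp_ℝ]
  open scoped Norms.Operator in exact (algebraMap_exp_comm c).symm

theorem exp_apply_nonneg_of_nonneg {M : Matrix ι ι ℝ} (hM : ∀ i j, 0 ≤ M i j) (i j : ι) :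
    0 ≤ exp M i j := by
  have hseries := Pi.hasSum.mp (Pi.hasSum.mp (hasSum_exp_series M) i) j
  refine hasSum_le (fun m => ?_) hasSum_zero hseries
  simpa using mul_nonneg (by positivity) (pow_apply_nonneg hM m i j)

theorem exp_apply_nonneg_of_offDiag_nonneg {B : Matrix ι ι ℝ} (hB : ∀ i j, i ≠ j → 0 ≤ B i j)
    (i j : ι) : 0 ≤ exp B i j := by
  set c := ∑ k, |B k k|
  have hshift : ∀ i j, 0 ≤ (B + c • 1) i j := by
    intro i j
    rcases eq_or_ne i j with rfl | hij
    · have : |B i i| ≤ c :=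
        Finset.single_le_sum (fun k _ => abs_nonneg (B k k)) (Finset.mem_univ i)
      simp only [add_apply, smul_apply, one_apply_eq, smul_eq_mul, mul_one]
      linarith [neg_abs_le (B i i)]
    · simpa [one_apply_ne hij] using hB i j hij
  have hexp : exp B = Real.exp (-c) • exp (B + c • 1) :=
    calc exp B = exp ((B + c • 1) + (-c) • 1) := by
          rw [add_assoc, ← add_smul, add_neg_cancel, zero_smul, add_zero]
      _ = exp (B + c • 1) * exp ((-c) • 1) :=
          Matrix.exp_add_of_commute _ _ ((Commute.one_right _).smul_right _)
      _ = Real.exp (-c) • exp (B + c • 1) := by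
          rw [exp_smul_one, Matrix.mul_smul, mul_one]
  rw [hexp]
  exact mul_nonneg (Real.exp_pos _).le (exp_apply_nonneg_of_nonneg hshift i j)

end Matrix

/-- Proposition 6: the exponential flow of a graph Laplacian maps probability
vectors to probability vectors. -/
theorem exp_maps_prob_to_prob
    {n : ℕ} (A : Matrix (Fin n) (Fin n) ℝ)
    (hA : IsGraphLaplacian A)
    (t : ℝ) (ht : 0 ≤ t)
    (p : Fin n → ℝ) (hp : ∀ i, 0 ≤ p i) (hpsum : ∑ i : Fin n, p i = 1) :
    (∀ i, 0 ≤ (NormedSpace.exp (t • A) *ᵥ p) i) ∧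
      ∑ i : Fin n, (NormedSpace.exp (t • A) *ᵥ p) i = 1 := by
  obtain ⟨hoff, -, hcol⟩ := hA
  have hmetzler : ∀ i j, i ≠ j → 0 ≤ (t • A) i j :=
    fun i j hij => mul_nonneg ht (hoff i j hij)
  have hmass : (1 : Fin n → ℝ) ᵥ* (t • A) = 0 := by
    ext j
    simp [vecMul, one_dotProduct, ← Finset.mul_sum, hcol j]
  refine ⟨fun i => dotProduct_nonneg_of_nonneg
    (exp_apply_nonneg_of_offDiag_nonneg hmetzler i) hp, ?_⟩
  rw [← one_dotProduct, dotProduct_mulVec, vecMul_exp_of_vecMul_eq_zero hmass, one_dotProduct,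
    hpsum]
end

section
/- Let A be an n × n real graph Laplacian matrix and let t ≥ 0. Then the matrix I − t·A is invertible and every entry of (I − t·A)⁻¹ is nonnegative. -/
open Matrix

/-! For `t ≥ 0`, `t • A` has nonnegative off-diagonal entries and zero column sums. Shifting by
`c = ∑ k, |t * A k k|` gives `1 - t • A = (1 + c) • (1 - P)` with `P = (1 + c)⁻¹ • (c • 1 + t • A)`
entrywise nonnegative and of column sums `c / (1 + c) < 1`. Then `Pᵀ` has `ℓ∞`-operator norm
`< 1`, so `(1 - Pᵀ)⁻¹` is the sum of the Neumann series `∑ Pᵀ ^ k`, whose terms are entrywise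
nonnegative. -/

namespace Matrix

variable {ι : Type*} [Fintype ι] [DecidableEq ι]

def IsInvNonneg (M : Matrix ι ι ℝ) : Prop :=
  IsUnit M ∧ ∀ i j, 0 ≤ M⁻¹ i j

theorem IsInvNonneg.transpose {M : Matrix ι ι ℝ} (hM : IsInvNonneg M) : IsInvNonneg Mᵀ :=
  ⟨(isUnit_transpose M).2 hM.1, fun i j => by rw [← transpose_nonsing_inv]; exact hM.2 j i⟩

theorem IsInvNonneg.smul {M : Matrix ι ι ℝ} (hM : IsInvNonneg M) {a : ℝ} (ha : 0 < a) :
    IsInvNonneg (a • M) := by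
  have hinv : (a • M)⁻¹ = a⁻¹ • M⁻¹ := by
    have := invertibleOfNonzero ha.ne'
    rw [Matrix.inv_smul (A := M) a ((isUnit_iff_isUnit_det M).1 hM.1), invOf_eq_inv]
  refine ⟨hM.1.smul (Units.mk0 a ha.ne'), fun i j => ?_⟩
  rw [hinv, smul_apply, smul_eq_mul]
  exact mul_nonneg (inv_nonneg.2 ha.le) (hM.2 i j)

section Neumann

attribute [local instance] Matrix.linftyOpNormedRing Matrix.linftyOpNormedAlgebra

theorem linfty_opNorm_lt_one_of_row_sum_lt_one {P : Matrix ι ι ℝ} (hP : ∀ i j, 0 ≤ P i j)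
    (hrow : ∀ i, ∑ j, P i j < 1) : ‖P‖ < 1 := by
  have hrow' : ∀ i, ∑ j, ‖P i j‖₊ < 1 := fun i => by
    rw [← NNReal.coe_lt_coe, NNReal.coe_sum]
    simpa [Real.norm_of_nonneg (hP i _)] using hrow i
  rw [linfty_opNorm_def, NNReal.coe_lt_one]
  exact Finset.sup_lt_iff zero_lt_one |>.2 fun i _ => hrow' i

theorem isInvNonneg_one_sub_of_row_sum_lt_one {P : Matrix ι ι ℝ} (hP : ∀ i j, 0 ≤ P i j)
    (hrow : ∀ i, ∑ j, P i j < 1) : IsInvNonneg (1 - P) := by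
  have hnorm := linfty_opNorm_lt_one_of_row_sum_lt_one hP hrow
  have hsum := hasSum_geom_series_inverse P hnorm
  refine ⟨isUnit_one_sub_of_norm_lt_one hnorm, fun i j => ?_⟩
  rw [nonsing_inv_eq_ringInverse]
  exact (Pi.hasSum.1 (Pi.hasSum.1 hsum i) j).nonneg fun k => pow_apply_nonneg hP k i j

end Neumann

theorem isInvNonneg_one_sub_of_col_sum_lt_one {P : Matrix ι ι ℝ} (hP : ∀ i j, 0 ≤ P i j)
    (hcol : ∀ j, ∑ i, P i j < 1) : IsInvNonneg (1 - P) := by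
  simpa using (isInvNonneg_one_sub_of_row_sum_lt_one (P := Pᵀ) (fun i j => hP j i) hcol).transpose

theorem isInvNonneg_one_sub_of_col_sum_lt_one_of_offDiag_nonneg {B : Matrix ι ι ℝ}
    (hoff : ∀ i j, i ≠ j → 0 ≤ B i j) (hcol : ∀ j, ∑ i, B i j < 1) : IsInvNonneg (1 - B) := by
  set c := ∑ k, |B k k|
  have hc : 0 ≤ c := Finset.sum_nonneg fun k _ => abs_nonneg _
  have hdiag : ∀ k, 0 ≤ c + B k k := fun k => by
    have := Finset.single_le_sum (f := fun k => |B k k|) (fun k _ => abs_nonneg _)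
      (Finset.mem_univ k)
    linarith [neg_abs_le (B k k)]
  have h1c : 0 < 1 + c := by linarith
  set P := (1 + c)⁻¹ • (c • 1 + B)
  have hP : ∀ i j, 0 ≤ P i j := fun i j => by
    have : 0 ≤ c * (1 : Matrix ι ι ℝ) i j + B i j := by
      rcases eq_or_ne i j with rfl | hij
      · simpa using hdiag i
      · simpa [one_apply_ne hij] using hoff i j hij
    simpa only [P, smul_apply, add_apply, smul_eq_mul] using mul_nonneg (inv_nonneg.2 h1c.le) this
  have hPcol : ∀ j, ∑ i, P i j < 1 := fun j => by
    have : ∑ i, P i j = (1 + c)⁻¹ * (c + ∑ i, B i j) := by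
      simp [P, ← Finset.mul_sum, Finset.sum_add_distrib, one_apply, mul_add]
    rw [this, inv_mul_lt_iff₀ h1c]
    linarith [hcol j]
  have hB : 1 - B = (1 + c) • (1 - P) := by
    rw [smul_sub, smul_smul, mul_inv_cancel₀ h1c.ne', one_smul]
    module
  rw [hB]
  exact (isInvNonneg_one_sub_of_col_sum_lt_one hP hPcol).smul h1c

end Matrix

/-- Proposition 7: for a graph Laplacian `A` and `t ≥ 0`, the matrix `I - t•A` is
invertible and its inverse is entrywise nonnegative. -/
theorem resolvent_nonneg
    {n : ℕ} (A : Matrix (Fin n) (Fin n) ℝ)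
    (hA : IsGraphLaplacian A)
    (t : ℝ) (ht : 0 ≤ t) :
    IsUnit (1 - t • A) ∧ ∀ i j : Fin n, 0 ≤ ((1 - t • A)⁻¹) i j := by
  obtain ⟨hoff, -, hcol⟩ := hA
  refine isInvNonneg_one_sub_of_col_sum_lt_one_of_offDiag_nonneg
    (fun i j hij => mul_nonneg ht (hoff i j hij)) fun j => ?_
  simp [← Finset.mul_sum, hcol j]
end

section
/- Let A be an n × n real graph Laplacian matrix, let h ≥ 0, and let y ∈ ℝⁿ satisfy y ⪰ 0 and ∑_i y_i = 1. Then the Modified Patankar–Euler update u = (I − h·A)⁻¹ *ᵥ y is well defined (I − hA is invertible) and satisfies u ⪰ 0 and ∑_i u_i = 1. -/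
open Matrix

/-- Key sign lemma: if `B` has nonpositive off-diagonal entries and every column
sums to `1`, then `B *ᵥ u ⪰ 0` implies `u ⪰ 0`. -/
lemma key_sign {n : ℕ} (B : Matrix (Fin n) (Fin n) ℝ)
    (hoff : ∀ i j : Fin n, i ≠ j → B i j ≤ 0)
    (hcol : ∀ j : Fin n, ∑ i : Fin n, B i j = 1)
    (u : Fin n → ℝ) (hBu : ∀ i, 0 ≤ (B *ᵥ u) i) : ∀ j, 0 ≤ u j := by
  by_contra hcon
  push_neg at hcon
  set S : Finset (Fin n) := Finset.univ.filter (fun i => u i < 0) with hS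
  have hSne : S.Nonempty := by
    obtain ⟨j, hj⟩ := hcon
    exact ⟨j, by simp [hS, hj]⟩
  have hmem : ∀ j : Fin n, j ∈ S ↔ u j < 0 := by intro j; simp [hS]
  -- T = ∑_{i∈S} (B u)_i ≥ 0
  have hT0 : 0 ≤ ∑ i ∈ S, (B *ᵥ u) i := Finset.sum_nonneg fun i _ => hBu i
  -- swap sums
  have hswap : ∑ i ∈ S, (B *ᵥ u) i = ∑ j : Fin n, (∑ i ∈ S, B i j) * u j := by
    simp only [mulVec, dotProduct]
    rw [Finset.sum_comm]
    simp [Finset.sum_mul]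
  -- bound each term
  have hbound : ∀ j : Fin n, (∑ i ∈ S, B i j) * u j ≤ if j ∈ S then u j else 0 := by
    intro j
    by_cases hjS : j ∈ S
    · have huj : u j < 0 := (hmem j).1 hjS
      have hc : 1 ≤ ∑ i ∈ S, B i j := by
        have hsplit : (∑ i ∈ S, B i j) + ∑ i ∈ Sᶜ, B i j = 1 := by
          rw [Finset.sum_add_sum_compl]; exact hcol j
        have hneg : ∑ i ∈ Sᶜ, B i j ≤ 0 := by
          apply Finset.sum_nonpos
          intro i hi
          have : i ≠ j := by
            intro hij; subst hij
            exact (Finset.mem_compl.1 hi) hjS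
          exact hoff i j this
        linarith
      simp only [hjS, if_true]
      nlinarith
    · have huj : 0 ≤ u j := le_of_not_gt ((hmem j).not.1 hjS)
      have hc : ∑ i ∈ S, B i j ≤ 0 := by
        apply Finset.sum_nonpos
        intro i hi
        have : i ≠ j := by rintro rfl; exact hjS hi
        exact hoff i j this
      simp only [hjS, if_false]
      exact mul_nonpos_of_nonpos_of_nonneg hc huj
  have hsum : ∑ j : Fin n, (∑ i ∈ S, B i j) * u j ≤ ∑ j ∈ S, u j := by
    calc ∑ j : Fin n, (∑ i ∈ S, B i j) * u j
        ≤ ∑ j : Fin n, (if j ∈ S then u j else 0) := Finset.sum_le_sum fun j _ => hbound j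
      _ = ∑ j ∈ S, u j := by rw [Finset.sum_ite_mem]; simp
  have hneg : ∑ j ∈ S, u j < 0 := by
    apply Finset.sum_neg (fun j hj => (hmem j).1 hj) hSne
  rw [hswap] at hT0
  linarith

/-- The Modified Patankar–Euler update `u = (I - h•A)⁻¹ *ᵥ y` is well defined and
preserves both positivity and mass unconditionally. -/
theorem modifiedPatankarEuler_preserves
    {n : ℕ} (A : Matrix (Fin n) (Fin n) ℝ)
    (hA : IsGraphLaplacian A)
    (h : ℝ) (hh : 0 ≤ h)
    (y : Fin n → ℝ) (hy : ∀ i, 0 ≤ y i) (hysum : ∑ i : Fin n, y i = 1) :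
    IsUnit (1 - h • A) ∧
      (∀ i, 0 ≤ ((1 - h • A)⁻¹ *ᵥ y) i) ∧
      ∑ i : Fin n, ((1 - h • A)⁻¹ *ᵥ y) i = 1 := by
  obtain ⟨hAoff, hAdiag, hAcol⟩ := hA
  set B : Matrix (Fin n) (Fin n) ℝ := 1 - h • A with hB
  have hBoff : ∀ i j : Fin n, i ≠ j → B i j ≤ 0 := by
    intro i j hij
    have : B i j = -(h * A i j) := by
      simp [hB, Matrix.sub_apply, Matrix.one_apply_ne hij, Matrix.smul_apply]
    rw [this]
    have := mul_nonneg hh (hAoff i j hij)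
    linarith
  have hBcol : ∀ j : Fin n, ∑ i : Fin n, B i j = 1 := by
    intro j
    have : ∑ i : Fin n, B i j = (∑ i : Fin n, (1 : Matrix (Fin n) (Fin n) ℝ) i j)
        - h * ∑ i : Fin n, A i j := by
      simp [hB, Matrix.sub_apply, Matrix.smul_apply, Finset.sum_sub_distrib, Finset.mul_sum]
    rw [this, hAcol j]
    simp [Matrix.one_apply]
  -- injectivity of mulVec
  have hker : ∀ u : Fin n → ℝ, B *ᵥ u = 0 → u = 0 := by
    intro u hu
    have h1 : ∀ j, 0 ≤ u j := key_sign B hBoff hBcol u (by simp [hu])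
    have h2 : ∀ j, 0 ≤ (-u) j := by
      apply key_sign B hBoff hBcol (-u)
      intro i
      simp [Matrix.mulVec_neg, hu]
    funext j
    have hj2 := h2 j
    simp only [Pi.neg_apply, neg_nonneg] at hj2
    have := le_antisymm hj2 (h1 j)
    simpa using this
  have hinj : Function.Injective (B.mulVec) := by
    intro u v huv
    have h0 : B *ᵥ (u - v) = 0 := by rw [Matrix.mulVec_sub, huv, sub_self]
    exact sub_eq_zero.1 (hker _ h0)
  have hunit : IsUnit B := Matrix.mulVec_injective_iff_isUnit.1 hinj
  have hBinv : B * B⁻¹ = 1 := Matrix.mul_nonsing_inv B ((Matrix.isUnit_iff_isUnit_det B).1 hunit)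
  have hBu : B *ᵥ (B⁻¹ *ᵥ y) = y := by
    rw [Matrix.mulVec_mulVec, hBinv, Matrix.one_mulVec]
  have hpos : ∀ i, 0 ≤ (B⁻¹ *ᵥ y) i :=
    key_sign B hBoff hBcol _ (fun i => by rw [hBu]; exact hy i)
  refine ⟨hunit, hpos, ?_⟩
  have hmass : ∑ i : Fin n, (B *ᵥ (B⁻¹ *ᵥ y)) i = ∑ j : Fin n, (B⁻¹ *ᵥ y) j := by
    simp only [Matrix.mulVec, dotProduct]
    rw [Finset.sum_comm]
    simp only [← Finset.sum_mul, hBcol, one_mul]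
  rw [← hmass]
  rw [hBu]
  exact hysum
end

section
/- Let d ≥ 1, let A : (Fin d → ℝ) → Matrix (Fin d) (Fin d) ℝ be any matrix-valued function, let h ∈ ℝ, and let y_f ∈ ℝ^d satisfy A y_f *ᵥ y_f = 0 (a steady state of y' = A(y)y). Then the splitting scheme started at y_f returns y_f: with x_{1/2} = exp((h/2)·A y_f) *ᵥ y_f, z₁ = exp(h·A x_{1/2}) *ᵥ y_f, x₁ = exp((h/2)·A z₁) *ᵥ x_{1/2}, one has x_{1/2} = z₁ = x₁ = y_f, and hence y₁ = (x₁ + z₁)/2 = y_f. -/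
open Matrix NormedSpace

theorem NormedSpace.exp_mul_eq_self_of_mul_eq_zero {𝔸 : Type*}
    [NormedRing 𝔸] [NormedAlgebra ℚ 𝔸] [CompleteSpace 𝔸]
    {x y : 𝔸} (hxy : x * y = 0) : exp x * y = y := by
  have hpow : ∀ n ≠ 0, x ^ n * y = 0 := fun n hn => by
    obtain ⟨k, rfl⟩ := Nat.exists_eq_succ_of_ne_zero hn
    rw [pow_succ, mul_assoc, hxy, mul_zero]
  rw [exp_eq_tsum ℚ, ← (expSeries_summable' (𝕂 := ℚ) x).tsum_mul_right,
    tsum_eq_single 0 fun n hn => by rw [smul_mul_assoc, hpow n hn, smul_zero]]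
  simp

theorem Matrix.exp_mulVec_eq_self_of_mulVec_eq_zero {n 𝕜 : Type*} [Fintype n] [DecidableEq n]
    [NontriviallyNormedField 𝕜] [ProperSpace 𝕜] [NormedAlgebra ℚ 𝕜]
    {M : Matrix n n 𝕜} {v : n → 𝕜} (hv : M *ᵥ v = 0) : exp M *ᵥ v = v := by
  let : NormedRing (Matrix n n 𝕜) := Matrix.linftyOpNormedRing
  let : NormedAlgebra 𝕜 (Matrix n n 𝕜) := Matrix.linftyOpNormedAlgebra
  let : NormedAlgebra ℚ (Matrix n n 𝕜) := NormedAlgebra.restrictScalars ℚ 𝕜 _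
  -- completeness for the operator-norm uniformity, which instance search does not identify
  -- with the entrywise one of `Matrix.instCompleteSpace`
  have := FiniteDimensional.proper 𝕜 (Matrix n n 𝕜)
  have hcol : M * replicateCol n v = 0 := by
    rw [← replicateCol_mulVec, hv, replicateCol_zero]
  have hexp := exp_mul_eq_self_of_mul_eq_zero hcol
  rw [← replicateCol_mulVec] at hexp
  funext i
  exact congr_fun₂ hexp i i

theorem strangSplitting_fixes_steadyState_general
    {d : ℕ}
    (A : (Fin d → ℝ) → Matrix (Fin d) (Fin d) ℝ)
    (h : ℝ)
    (yf : Fin d → ℝ) (hyf : A yf *ᵥ yf = 0)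
    (xhalf z₁ x₁ : Fin d → ℝ)
    (hxhalf : xhalf = NormedSpace.exp ((h / 2) • A yf) *ᵥ yf)
    (hz₁ : z₁ = NormedSpace.exp (h • A xhalf) *ᵥ yf)
    (hx₁ : x₁ = NormedSpace.exp ((h / 2) • A z₁) *ᵥ xhalf) :
    xhalf = yf ∧ z₁ = yf ∧ x₁ = yf ∧ (1 / 2 : ℝ) • (x₁ + z₁) = yf := by
  have fixed (s : ℝ) : exp (s • A yf) *ᵥ yf = yf :=
    exp_mulVec_eq_self_of_mulVec_eq_zero (by rw [smul_mulVec, hyf, smul_zero])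
  have hxhalf' : xhalf = yf := hxhalf.trans (fixed _)
  have hz₁' : z₁ = yf := by rw [hz₁, hxhalf', fixed]
  have hx₁' : x₁ = yf := by rw [hx₁, hz₁', hxhalf', fixed]
  refine ⟨hxhalf', hz₁', hx₁', ?_⟩
  rw [hx₁', hz₁', ← two_smul ℝ yf, smul_smul]
  norm_num

/-- The Strang splitting scheme exactly preserves steady states of `y' = A(y)y`. -/
theorem strangSplitting_fixes_steadyState
    {d : ℕ} (hd : 1 ≤ d)
    (A : (Fin d → ℝ) → Matrix (Fin d) (Fin d) ℝ)
    (h : ℝ)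
    (yf : Fin d → ℝ) (hyf : A yf *ᵥ yf = 0)
    (xhalf z₁ x₁ : Fin d → ℝ)
    (hxhalf : xhalf = NormedSpace.exp ((h / 2) • A yf) *ᵥ yf)
    (hz₁ : z₁ = NormedSpace.exp (h • A xhalf) *ᵥ yf)
    (hx₁ : x₁ = NormedSpace.exp ((h / 2) • A z₁) *ᵥ xhalf) :
    xhalf = yf ∧ z₁ = yf ∧ x₁ = yf ∧ (1 / 2 : ℝ) • (x₁ + z₁) = yf :=
  strangSplitting_fixes_steadyState_general A h yf hyf xhalf z₁ x₁ hxhalf hz₁ hx₁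
end

section
/- Consider a system of N chemical reactions among M species governed by the Law of Mass Action: for nonnegative rate constants k : Fin N → ℝ and natural-number stoichiometric coefficients r, q : Fin M → Fin N → ℕ, define the stoichiometric matrix S i j = (q i j : ℝ) − (r i j : ℝ) and the propensities p j (y) = k j · ∏_i (y i)^{r i j}, and assume every reaction has at least one reactant: for every j there exists i with r i j ≥ 1. Then there exists a matrix-valued function L : (Fin M → ℝ) → Matrix (Fin M) (Fin M) ℝ such that for every y ∈ ℝ^M with y ⪰ 0: (a) L y *ᵥ y = S *ᵥ p(y), i.e. the mass-action vector field S p(y) equals L(y) y, and (b) all off-diagonal entries of L y are nonnegative (negative entries of L y can occur only on the diagonal). -/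
open Matrix

/-- Theorem 9: every mass-action ODE `y' = S p(y)` admits a quasi-linearised form
`y' = L(y) y` on the nonnegative cone in which the negative entries of `L(y)` can
occur only on the diagonal. -/
theorem massAction_quasiLinearised
    {M N : ℕ}
    (k : Fin N → ℝ) (hk : ∀ j, 0 ≤ k j)
    (r q : Fin M → Fin N → ℕ)
    (hreact : ∀ j : Fin N, ∃ i : Fin M, 1 ≤ r i j)
    (S : Matrix (Fin M) (Fin N) ℝ)
    (hS : ∀ i j, S i j = (q i j : ℝ) - (r i j : ℝ))
    (p : (Fin M → ℝ) → Fin N → ℝ)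
    (hp : ∀ y j, p y j = k j * ∏ i : Fin M, (y i) ^ (r i j)) :
    ∃ L : (Fin M → ℝ) → Matrix (Fin M) (Fin M) ℝ,
      ∀ y : Fin M → ℝ, (∀ i, 0 ≤ y i) →
        (L y *ᵥ y = S *ᵥ p y) ∧ (∀ i j : Fin M, i ≠ j → 0 ≤ L y i j) := by
  classical
  -- reactant of reaction j
  set i₀ : Fin N → Fin M := fun j => (hreact j).choose with hi₀
  have hi₀r : ∀ j, 1 ≤ r (i₀ j) j := fun j => (hreact j).choose_spec
  -- reduced propensity: p with one power of y i removed
  set red : (Fin M → ℝ) → Fin N → Fin M → ℝ :=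
    fun y j i => k j * ∏ i' : Fin M, (y i') ^ (r i' j - if i' = i then 1 else 0)
    with hred
  -- key identity
  have key : ∀ (y : Fin M → ℝ) (j : Fin N) (i : Fin M), 1 ≤ r i j →
      y i * red y j i = p y j := by
    intro y j i hij
    rw [hp]
    simp only [hred]
    have h1 : ∏ i' : Fin M, (y i') ^ (r i' j - if i' = i then 1 else 0)
        = (y i) ^ (r i j - 1) * ∏ i' ∈ Finset.univ.erase i, (y i') ^ (r i' j) := by
      rw [← Finset.mul_prod_erase Finset.univ _ (Finset.mem_univ i)]
      simp only [if_pos rfl]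
      congr 1
      exact Finset.prod_congr rfl fun x hx => by
        rw [if_neg (Finset.ne_of_mem_erase hx), Nat.sub_zero]
    have h2 : ∏ i' : Fin M, (y i') ^ (r i' j)
        = (y i) ^ (r i j) * ∏ i' ∈ Finset.univ.erase i, (y i') ^ (r i' j) := by
      rw [← Finset.mul_prod_erase Finset.univ _ (Finset.mem_univ i)]
    rw [h1, h2]
    have h3 : y i * (y i) ^ (r i j - 1) = (y i) ^ (r i j) := by
      rw [← pow_succ']
      congr 1
      omega
    linear_combination (k j * ∏ x ∈ Finset.univ.erase i, y x ^ r x j) * h3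
  -- construct L
  refine ⟨fun y => fun i m => ∑ j : Fin N,
    (if 0 ≤ S i j
      then (if m = i₀ j then S i j * red y j (i₀ j) else 0)
      else (if m = i then S i j * red y j i else 0)), ?_⟩
  intro y hy
  have hredpos : ∀ j i, 0 ≤ red y j i := by
    intro j i
    exact mul_nonneg (hk j) (Finset.prod_nonneg fun i' _ => pow_nonneg (hy i') _)
  constructor
  · funext i
    simp only [mulVec, dotProduct]
    simp only [Finset.sum_mul]
    rw [Finset.sum_comm]
    refine Finset.sum_congr rfl fun j _ => ?_
    by_cases hSij : 0 ≤ S i j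
    · simp only [if_pos hSij]
      rw [Finset.sum_eq_single (i₀ j) (fun m _ hm => by rw [if_neg hm, zero_mul])
        (fun h => absurd (Finset.mem_univ _) h)]
      rw [if_pos rfl, mul_assoc, mul_comm (red y j (i₀ j)), key y j (i₀ j) (hi₀r j)]
    · simp only [if_neg hSij]
      rw [Finset.sum_eq_single i (fun m _ hm => by rw [if_neg hm, zero_mul])
        (fun h => absurd (Finset.mem_univ _) h)]
      rw [if_pos rfl, mul_assoc, mul_comm (red y j i)]
      have hrij : 1 ≤ r i j := by
        by_contra h
        have : r i j = 0 := by omega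
        apply hSij
        rw [hS, this]
        simp [Nat.cast_nonneg]
      rw [key y j i hrij]
  · intro i m him
    refine Finset.sum_nonneg fun j _ => ?_
    by_cases hSij : 0 ≤ S i j
    · simp only [if_pos hSij]
      split
      · exact mul_nonneg hSij (hredpos j _)
      · exact le_refl 0
    · simp only [if_neg hSij]
      rw [if_neg (Ne.symm him)]
end

section
/- Let A be an n × n real graph Laplacian matrix, let a* = min_k A k k and à = A − a*·I (so à is entrywise nonnegative and 1ᵀ à = −a*·1ᵀ). Let t ≥ 0 satisfy t·(−a*) < 2. Then the matrix I − (t/2)·à is invertible, and the modified second-order Padé approximant R = ((1 + (t/2)a*)/(1 − (t/2)a*)) · (I + (t/2)·Ã) * (I − (t/2)·Ã)⁻¹ satisfies: every entry of R is nonnegative, and every column of R sums to one, i.e. 1ᵀ R = 1ᵀ. -/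
open Matrix

/-- The modified second-order Padé approximant to `exp (t•A)` is entrywise
nonnegative and has unit column sums on the stability region `t·(-a*) < 2`. -/
theorem pade_preserves
    {n : ℕ} (A : Matrix (Fin n) (Fin n) ℝ)
    (hA : IsGraphLaplacian A)
    (astar : ℝ) (hastar : IsLeast {x : ℝ | ∃ k : Fin n, A k k = x} astar)
    (Atilde : Matrix (Fin n) (Fin n) ℝ)
    (hAtilde : Atilde = A - astar • (1 : Matrix (Fin n) (Fin n) ℝ))
    (t : ℝ) (ht : 0 ≤ t) (hstab : t * (-astar) < 2)
    (R : Matrix (Fin n) (Fin n) ℝ)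
    (hR : R = ((1 + (t / 2) * astar) / (1 - (t / 2) * astar)) •
      ((1 + (t / 2) • Atilde) * (1 - (t / 2) • Atilde)⁻¹)) :
    IsUnit (1 - (t / 2) • Atilde) ∧
      (∀ i j : Fin n, 0 ≤ R i j) ∧
      (∀ j : Fin n, ∑ i : Fin n, R i j = 1) := by
  obtain ⟨hoff, hdiag, hcol⟩ := hA
  obtain ⟨⟨k0, hk0⟩, hlb⟩ := hastar
  have hastar_le : ∀ k, astar ≤ A k k := fun k => hlb ⟨k, rfl⟩
  have hastar_np : astar ≤ 0 := hk0 ▸ hdiag k0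
  set c : ℝ := t / 2 with hc
  have hc0 : 0 ≤ c := by positivity
  set σ : ℝ := c * (-astar) with hσdef
  have hσ0 : 0 ≤ σ := mul_nonneg hc0 (by linarith)
  have hσ1 : σ < 1 := by
    have h2 : σ * 2 = t * (-astar) := by rw [hσdef, hc]; ring
    linarith
  have hca : c * astar = -σ := by rw [hσdef]; ring
  set B : Matrix (Fin n) (Fin n) ℝ := c • Atilde with hBdef
  -- entrywise nonnegativity of Atilde and B
  have hAtnn : ∀ i j, 0 ≤ Atilde i j := by
    intro i j
    rw [hAtilde]
    simp only [Matrix.sub_apply, Matrix.smul_apply, smul_eq_mul]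
    by_cases h : i = j
    · subst h
      rw [Matrix.one_apply_eq]
      have := hastar_le i; linarith
    · rw [Matrix.one_apply_ne h]
      have := hoff i j h
      linarith
  have hBnn : ∀ i j, 0 ≤ B i j := fun i j => by
    rw [hBdef]; exact mul_nonneg hc0 (hAtnn i j)
  -- column sums
  have hcolAt : ∀ j, ∑ i, Atilde i j = -astar := by
    intro j
    rw [hAtilde]
    simp only [Matrix.sub_apply, Matrix.smul_apply, Matrix.one_apply, smul_eq_mul,
      Finset.sum_sub_distrib, hcol j, mul_ite, mul_one, mul_zero,
      Finset.sum_ite_eq' Finset.univ j, Finset.mem_univ, if_true]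
    ring
  have hcolB : ∀ j, ∑ i, B i j = σ := by
    intro j
    rw [hBdef]
    simp only [Matrix.smul_apply, smul_eq_mul, ← Finset.mul_sum, hcolAt j, hσdef]
  have hpow_nn : ∀ N, ∀ i j, 0 ≤ (B ^ N) i j := by
    intro N
    induction N with
    | zero =>
      intro i j
      rw [pow_zero]
      by_cases h : i = j
      · subst h; rw [Matrix.one_apply_eq]; norm_num
      · rw [Matrix.one_apply_ne h]
    | succ N ih =>
      intro i j
      rw [pow_succ, Matrix.mul_apply]
      exact Finset.sum_nonneg fun k _ => mul_nonneg (ih i k) (hBnn k j)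
  have hpow_col : ∀ N, ∀ j, ∑ i, (B ^ N) i j = σ ^ N := by
    intro N
    induction N with
    | zero =>
      intro j
      rw [pow_zero, pow_zero]
      simp only [Matrix.one_apply, Finset.sum_ite_eq' Finset.univ j, Finset.mem_univ, if_true]
    | succ N ih =>
      intro j
      rw [pow_succ']
      simp only [Matrix.mul_apply]
      rw [Finset.sum_comm]
      calc ∑ k, ∑ i, B i k * (B ^ N) k j
          = ∑ k, (∑ i, B i k) * (B ^ N) k j := by simp [Finset.sum_mul]
        _ = ∑ k, σ * (B ^ N) k j := by simp_rw [hcolB]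
        _ = σ * σ ^ N := by rw [← Finset.mul_sum, ih j]
        _ = σ ^ (N + 1) := (pow_succ' σ N).symm
  set M : Matrix (Fin n) (Fin n) ℝ := 1 - B with hMdef
  have hBkk_le : ∀ k, B k k ≤ σ := by
    intro k
    rw [← hcolB k]
    exact Finset.single_le_sum (fun i _ => hBnn i k) (Finset.mem_univ k)
  have hdet : M.det ≠ 0 := by
    apply det_ne_zero_of_sum_col_lt_diag
    intro k
    have h1 : ∑ i ∈ Finset.univ.erase k, ‖M i k‖ = σ - B k k := by
      have he : ∀ i ∈ Finset.univ.erase k, ‖M i k‖ = B i k := by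
        intro i hi
        have hik : i ≠ k := Finset.ne_of_mem_erase hi
        rw [hMdef]
        simp only [Matrix.sub_apply, Matrix.one_apply, if_neg hik, zero_sub,
          Real.norm_eq_abs, abs_neg, abs_of_nonneg (hBnn i k)]
      rw [Finset.sum_congr rfl he]
      have hsplit := Finset.add_sum_erase Finset.univ (fun i => B i k) (Finset.mem_univ k)
      rw [hcolB k] at hsplit
      linarith
    have h2 : ‖M k k‖ = 1 - B k k := by
      rw [hMdef]
      simp only [Matrix.sub_apply, Matrix.one_apply_eq, Real.norm_eq_abs]
      rw [abs_of_nonneg]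
      have := hBkk_le k; linarith
    rw [h1, h2]
    have := hBnn k k
    linarith
  have hdetu : IsUnit M.det := isUnit_iff_ne_zero.2 hdet
  have hunit : IsUnit M := (Matrix.isUnit_iff_isUnit_det M).2 hdetu
  have hMMinv : M * M⁻¹ = 1 := Matrix.mul_nonsing_inv M hdetu
  have hMinvM : M⁻¹ * M = 1 := Matrix.nonsing_inv_mul M hdetu
  have hcolM : ∀ j, ∑ i, M i j = 1 - σ := by
    intro j
    rw [hMdef]
    simp only [Matrix.sub_apply, Finset.sum_sub_distrib, hcolB j, Matrix.one_apply,
      Finset.sum_ite_eq' Finset.univ j, Finset.mem_univ, if_true]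
  have h1σ : (0:ℝ) < 1 - σ := by linarith
  have hne : (1:ℝ) - σ ≠ 0 := ne_of_gt h1σ
  have hcolMinv : ∀ j, ∑ i, M⁻¹ i j = (1 - σ)⁻¹ := by
    intro j
    have h1 : ∑ i, (M * M⁻¹) i j = 1 := by
      rw [hMMinv]
      simp only [Matrix.one_apply, Finset.sum_ite_eq' Finset.univ j, Finset.mem_univ, if_true]
    rw [show (∑ i, (M * M⁻¹) i j) = (1 - σ) * ∑ k, M⁻¹ k j by
      simp only [Matrix.mul_apply]
      rw [Finset.sum_comm]
      calc ∑ k, ∑ i, M i k * M⁻¹ k j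
          = ∑ k, (∑ i, M i k) * M⁻¹ k j := by simp [Finset.sum_mul]
        _ = ∑ k, (1 - σ) * M⁻¹ k j := by simp_rw [hcolM]
        _ = (1 - σ) * ∑ k, M⁻¹ k j := by rw [← Finset.mul_sum]] at h1
    field_simp [hne] at h1 ⊢
    linarith
  -- nonnegativity of M⁻¹
  have hMinv_nn : ∀ i j, 0 ≤ M⁻¹ i j := by
    intro i j
    set C : ℝ := ∑ k, |M⁻¹ i k| with hCdef
    have key : ∀ N : ℕ, -(C * σ ^ N) ≤ M⁻¹ i j := by
      intro N
      set S : Matrix (Fin n) (Fin n) ℝ := ∑ k ∈ Finset.range N, B ^ k with hSdef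
      have hgs := mul_geom_sum B N
      have htel : M * S = 1 - B ^ N := by
        have h' : M * S = -((B - 1) * S) := by rw [hMdef]; noncomm_ring
        rw [h', hgs, neg_sub]
      have hrep : M⁻¹ = S + M⁻¹ * B ^ N := by
        have h2 : M⁻¹ * (M * S) = M⁻¹ * (1 - B ^ N) := by rw [htel]
        rw [← Matrix.mul_assoc, hMinvM, Matrix.one_mul, Matrix.mul_sub, Matrix.mul_one] at h2
        rw [h2]
        noncomm_ring
      have hij : M⁻¹ i j = S i j + (M⁻¹ * B ^ N) i j := by
        conv_lhs => rw [hrep]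
        rw [Matrix.add_apply]
      have hS_nn : 0 ≤ S i j := by
        rw [hSdef, Matrix.sum_apply]
        exact Finset.sum_nonneg fun k _ => hpow_nn k i j
      have hbound : -(C * σ ^ N) ≤ (M⁻¹ * B ^ N) i j := by
        rw [Matrix.mul_apply]
        have hterm : ∀ k ∈ Finset.univ, -(|M⁻¹ i k| * σ ^ N) ≤ M⁻¹ i k * (B ^ N) k j := by
          intro k _
          have h1 : (B ^ N) k j ≤ σ ^ N := by
            rw [← hpow_col N j]
            exact Finset.single_le_sum (fun i _ => hpow_nn N i j) (Finset.mem_univ k)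
          have h2 : 0 ≤ (B ^ N) k j := hpow_nn N k j
          nlinarith [neg_abs_le (M⁻¹ i k), abs_nonneg (M⁻¹ i k)]
        calc -(C * σ ^ N) = ∑ k, -(|M⁻¹ i k| * σ ^ N) := by
              rw [Finset.sum_neg_distrib, ← Finset.sum_mul, hCdef]
          _ ≤ _ := Finset.sum_le_sum hterm
      rw [hij]
      linarith
    have hten : Filter.Tendsto (fun N : ℕ => -(C * σ ^ N)) Filter.atTop (nhds 0) := by
      have h0 := tendsto_pow_atTop_nhds_zero_of_lt_one hσ0 hσ1
      have := (h0.const_mul C).neg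
      simpa using this
    exact le_of_tendsto' hten key
  -- final assembly
  set P : Matrix (Fin n) (Fin n) ℝ := 1 + B with hPdef
  have hPnn : ∀ i j, 0 ≤ P i j := by
    intro i j
    rw [hPdef]
    rw [Matrix.add_apply]
    have h1 := hBnn i j
    by_cases h : i = j
    · rw [h, Matrix.one_apply_eq]
      have := hBnn j j; linarith
    · rw [Matrix.one_apply_ne h]
      linarith
  have hcolP : ∀ j, ∑ i, P i j = 1 + σ := by
    intro j
    rw [hPdef]
    simp only [Matrix.add_apply, Finset.sum_add_distrib, hcolB j, Matrix.one_apply,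
      Finset.sum_ite_eq' Finset.univ j, Finset.mem_univ, if_true]
  set s : ℝ := (1 + c * astar) / (1 - c * astar) with hsdef
  have hs_eq : s = (1 - σ) / (1 + σ) := by rw [hsdef, hca]; ring_nf
  have hs_nn : 0 ≤ s := by
    rw [hs_eq]
    positivity
  refine ⟨hunit, ?_, ?_⟩
  · intro i j
    rw [hR]
    simp only [Matrix.smul_apply, smul_eq_mul]
    apply mul_nonneg hs_nn
    rw [Matrix.mul_apply]
    exact Finset.sum_nonneg fun k _ => mul_nonneg (hPnn i k) (hMinv_nn k j)
  · intro j
    rw [hR]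
    simp only [Matrix.smul_apply, smul_eq_mul]
    rw [← Finset.mul_sum]
    have hsum : ∑ i, (P * M⁻¹) i j = (1 + σ) * (1 - σ)⁻¹ := by
      simp only [Matrix.mul_apply]
      rw [Finset.sum_comm]
      calc ∑ k, ∑ i, P i k * M⁻¹ k j
          = ∑ k, (∑ i, P i k) * M⁻¹ k j := by simp [Finset.sum_mul]
        _ = ∑ k, (1 + σ) * M⁻¹ k j := by simp_rw [hcolP]
        _ = (1 + σ) * ∑ k, M⁻¹ k j := by rw [← Finset.mul_sum]
        _ = (1 + σ) * (1 - σ)⁻¹ := by rw [hcolMinv j]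
    rw [hsum, hs_eq]
    have h1σ' : (1:ℝ) + σ ≠ 0 := by positivity
    field_simp
end

section
/- Let A be an n × n real graph Laplacian matrix, let t ≥ 0, and let n₀ ≥ 1 be a natural number. Then the matrix (I − (t/n₀)·A)⁻¹ raised to the power n₀, i.e. ((I − (t/n₀)·A)⁻¹)^{n₀}, is well defined (I − (t/n₀)A is invertible) and all of its entries are nonnegative. -/
open Matrix

attribute [local instance] Matrix.linftyOpNormedRing Matrix.linftyOpNormedAlgebra

section aux

variable {n : ℕ}

lemma pow_entry_nonneg (Q : Matrix (Fin n) (Fin n) ℝ) (hQ : ∀ i j, 0 ≤ Q i j) :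
    ∀ k, ∀ i j, 0 ≤ (Q ^ k) i j := by
  intro k
  induction k with
  | zero => intro i j; simp [Matrix.one_apply]; positivity
  | succ k ih =>
    intro i j
    rw [pow_succ, Matrix.mul_apply]
    exact Finset.sum_nonneg fun l _ => mul_nonneg (ih i l) (hQ l j)

lemma inv_one_sub_nonneg (Q : Matrix (Fin n) (Fin n) ℝ)
    (hQ : ∀ i j, 0 ≤ Q i j) (h : ‖Q‖ < 1) :
    IsUnit (1 - Q) ∧ ∀ i j, 0 ≤ (1 - Q)⁻¹ i j := by
  have hu : IsUnit (1 - Q) := isUnit_one_sub_of_norm_lt_one h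
  refine ⟨hu, fun i j => ?_⟩
  have hsum : HasSum (fun k : ℕ => Q ^ k) (Ring.inverse (1 - Q)) :=
    hasSum_geom_series_inverse Q h
  have hinv : (1 - Q)⁻¹ = Ring.inverse (1 - Q) :=
    Matrix.nonsing_inv_eq_ringInverse _
  -- evaluate entrywise
  let e : Matrix (Fin n) (Fin n) ℝ →ₗ[ℝ] ℝ :=
    { toFun := fun M => M i j
      map_add' := fun _ _ => rfl
      map_smul' := fun _ _ => rfl }
  have he : Continuous e := e.continuous_of_finiteDimensional
  have h2 : HasSum (fun k : ℕ => (Q ^ k) i j) ((Ring.inverse (1 - Q)) i j) :=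
    hsum.map (⟨e, he⟩ : Matrix (Fin n) (Fin n) ℝ →L[ℝ] ℝ) he
  rw [hinv]
  exact h2.nonneg fun k => pow_entry_nonneg Q hQ k i j

end aux

/-- For a graph Laplacian `A`, `t ≥ 0` and `n₀ ≥ 1`, the matrix `I - (t/n₀)•A` is
invertible and all entries of `((I - (t/n₀)•A)⁻¹)^n₀` are nonnegative. -/
theorem resolvent_pow_nonneg
    {n : ℕ} (A : Matrix (Fin n) (Fin n) ℝ)
    (hA : IsGraphLaplacian A)
    (t : ℝ) (ht : 0 ≤ t)
    (n₀ : ℕ) (hn₀ : 1 ≤ n₀) :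
    IsUnit (1 - (t / (n₀ : ℝ)) • A) ∧
      ∀ i j : Fin n, 0 ≤ (((1 - (t / (n₀ : ℝ)) • A)⁻¹) ^ n₀) i j := by
  obtain ⟨hoff, hdiag, hcol⟩ := hA
  set s : ℝ := t / (n₀ : ℝ) with hs
  have hs0 : 0 ≤ s := div_nonneg ht (Nat.cast_nonneg _)
  -- transpose setup
  set M : Matrix (Fin n) (Fin n) ℝ := s • Aᵀ with hM
  have hMoff : ∀ i j, i ≠ j → 0 ≤ M i j := fun i j hij =>
    mul_nonneg hs0 (hoff j i (Ne.symm hij))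
  have hMdiag : ∀ i, M i i ≤ 0 := fun i =>
    mul_nonpos_of_nonneg_of_nonpos hs0 (hdiag i)
  have hMrow : ∀ i, ∑ j, M i j = 0 := by
    intro i
    simp only [hM, Matrix.smul_apply, Matrix.transpose_apply, smul_eq_mul,
      ← Finset.mul_sum, hcol i, mul_zero]
  set c : ℝ := ∑ k, (-(M k k)) with hc
  have hc0 : 0 ≤ c := Finset.sum_nonneg fun k _ => neg_nonneg.mpr (hMdiag k)
  have hcle : ∀ k, -(M k k) ≤ c :=
    fun k => Finset.single_le_sum (fun l _ => neg_nonneg.mpr (hMdiag l)) (Finset.mem_univ k)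
  set P : Matrix (Fin n) (Fin n) ℝ := M + c • (1 : Matrix (Fin n) (Fin n) ℝ) with hP
  have hPnn : ∀ i j, 0 ≤ P i j := by
    intro i j
    by_cases hij : i = j
    · subst hij
      simp only [hP, Matrix.add_apply, Matrix.smul_apply, Matrix.one_apply_eq, smul_eq_mul,
        mul_one]
      linarith [hcle i]
    · simpa [hP, Matrix.one_apply_ne hij] using hMoff i j hij
  have hProw : ∀ i, ∑ j, P i j = c := by
    intro i
    simp only [hP, Matrix.add_apply, Finset.sum_add_distrib, hMrow i, zero_add,
      Matrix.smul_apply, smul_eq_mul]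
    rw [Finset.sum_eq_single i]
    · simp
    · intro b _ hb; simp [Matrix.one_apply_ne (Ne.symm hb)]
    · simp
  have h1c : (0:ℝ) < 1 + c := by linarith
  set Q : Matrix (Fin n) (Fin n) ℝ := (1 + c)⁻¹ • P with hQ
  have hQnn : ∀ i j, 0 ≤ Q i j := fun i j =>
    mul_nonneg (inv_nonneg.mpr h1c.le) (hPnn i j)
  have hQnorm : ‖Q‖ < 1 := by
    have hnn : ‖Q‖₊ < 1 := by
      rw [Matrix.linfty_opNNNorm_def]
      rw [Finset.sup_lt_iff (by norm_num : (⊥ : NNReal) < 1)]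
      intro i _
      rw [← NNReal.coe_lt_coe]
      push_cast
      simp only [coe_nnnorm, Real.norm_eq_abs]
      rw [Finset.sum_congr rfl (fun j _ => abs_of_nonneg (hQnn i j))]
      have : ∑ j, Q i j = (1+c)⁻¹ * c := by
        simp only [hQ, Matrix.smul_apply, smul_eq_mul, ← Finset.mul_sum, hProw i]
      rw [this, ← div_eq_inv_mul, div_lt_one h1c]
      linarith
    rw [← coe_nnnorm]
    exact_mod_cast hnn
  obtain ⟨huQ, hinvQ⟩ := inv_one_sub_nonneg Q hQnn hQnorm
  -- relate: (1 - s•A)ᵀ = (1+c) • (1 - Q)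
  have key : (1 - s • A)ᵀ = (1 + c) • (1 - Q) := by
    rw [smul_sub]
    simp only [hQ, smul_smul, mul_inv_cancel₀ h1c.ne', one_smul]
    simp only [hP, smul_add]
    rw [Matrix.transpose_sub, Matrix.transpose_one, Matrix.transpose_smul]
    have : (1 + c) • (1 : Matrix (Fin n) (Fin n) ℝ) = 1 + c • 1 := by
      rw [add_smul, one_smul]
    rw [this, ← hM]
    abel
  have hBT : IsUnit ((1 - s • A)ᵀ) := by
    rw [key]
    exact (IsUnit.smul (Units.mk0 (1+c) h1c.ne' ) huQ)
  have hB : IsUnit (1 - s • A) := by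
    rw [Matrix.isUnit_iff_isUnit_det] at hBT ⊢
    rwa [Matrix.det_transpose] at hBT
  refine ⟨hB, fun i j => ?_⟩
  -- nonnegativity of inverse entries
  have hinvT : ∀ i j, 0 ≤ ((1 - s • A)ᵀ)⁻¹ i j := by
    intro i j
    haveI : Invertible (1 + c) := invertibleOfNonzero h1c.ne'
    rw [key, Matrix.inv_smul (k := (1 + c)) (A := 1 - Q) ((Matrix.isUnit_iff_isUnit_det _).mp huQ),
      invOf_eq_inv, Matrix.smul_apply, smul_eq_mul]
    exact mul_nonneg (inv_nonneg.mpr h1c.le) (hinvQ i j)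
  have hinvB : ∀ i j, 0 ≤ (1 - s • A)⁻¹ i j := by
    intro i j
    have := hinvT j i
    rwa [← Matrix.transpose_nonsing_inv, Matrix.transpose_apply] at this
  exact pow_entry_nonneg _ hinvB n₀ i j
end
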